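/- arXiv:2212.04861 — 2 statements merged into one kernel-verified Lean document; each statement's English description precedes it below -/
import Mathlib

section
/- Let Q be a symmetric n×n matrix, λ > 1, δ > 0, and let D₁, …, D_m be n×n matrices each satisfying vᵀ(D_kᵀ Q D_k − λQ − δ·Id)v ≥ 0 for all v ∈ ℝⁿ. Set q(z) = zᵀ Q z. If v ∈ ℝⁿ satisfies q(v) ≥ 0, then ‖D_m ⋯ D₁ v‖² ≥ q(D_m ⋯ D₁ v) — provided Q = diag(Id_{d_u}, −Id_{d_s}) — and moreover q(D_m ⋯ D₁ v) ≥ λ^{m−1} δ ‖v‖². -/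
open Matrix in
/-- Iterated expansion estimate: with `Q = diag(Id_{d_u}, −Id_{d_s})`, `λ > 1`, `δ > 0`,
matrices `D k` each satisfying `vᵀ(D_kᵀ Q D_k − λQ − δId)v ≥ 0`, and `w` the orbit
`w 0 = v`, `w (k+1) = D k • w k`, if `q(v) ≥ 0` then
`‖w m‖² ≥ q(w m)` and `q(w m) ≥ λ^(m−1) δ ‖v‖²` for `m ≥ 1`. -/
theorem stmt_8 (du ds : ℕ)
    (Q : Matrix (Fin du ⊕ Fin ds) (Fin du ⊕ Fin ds) ℝ)
    (hQ : Q = Matrix.diagonal (Sum.elim (fun _ => (1 : ℝ)) (fun _ => (-1 : ℝ))))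
    (lam δ : ℝ) (hlam : lam > 1) (hδ : δ > 0)
    (m : ℕ) (hm : 1 ≤ m)
    (D : ℕ → Matrix (Fin du ⊕ Fin ds) (Fin du ⊕ Fin ds) ℝ)
    (hpsd : ∀ k, ∀ v : Fin du ⊕ Fin ds → ℝ,
      0 ≤ v ⬝ᵥ ((D k)ᵀ * Q * (D k) - lam • Q - δ • (1 : Matrix _ _ ℝ)).mulVec v)
    (v : Fin du ⊕ Fin ds → ℝ) (hv : v ⬝ᵥ Q.mulVec v ≥ 0)
    (w : ℕ → Fin du ⊕ Fin ds → ℝ)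
    (hw0 : w 0 = v) (hws : ∀ k, w (k + 1) = (D k).mulVec (w k)) :
    (∑ i, w m i ^ 2) ≥ (w m) ⬝ᵥ Q.mulVec (w m) ∧
    (w m) ⬝ᵥ Q.mulVec (w m) ≥ lam ^ (m - 1) * δ * ∑ i, v i ^ 2 := by
  have hlam0 : (0:ℝ) < lam := lt_trans one_pos hlam
  -- first part: q(z) ≤ ‖z‖² for any z
  have hfirst : ∀ z : Fin du ⊕ Fin ds → ℝ, z ⬝ᵥ Q.mulVec z ≤ ∑ i, z i ^ 2 := by
    intro z
    subst hQ
    rw [dotProduct]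
    apply Finset.sum_le_sum
    intro i _
    rw [Matrix.mulVec_diagonal]
    cases i with
    | inl a => simp [sq]
    | inr b =>
      simp only [Sum.elim_inr]
      nlinarith [sq_nonneg (z (Sum.inr b))]
  -- step estimate
  have hstep : ∀ k, w (k+1) ⬝ᵥ Q.mulVec (w (k+1)) ≥
      lam * (w k ⬝ᵥ Q.mulVec (w k)) + δ * (w k ⬝ᵥ w k) := by
    intro k
    have h := hpsd k (w k)
    rw [Matrix.sub_mulVec, Matrix.sub_mulVec, dotProduct_sub,
      dotProduct_sub, Matrix.smul_mulVec, Matrix.smul_mulVec,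
      dotProduct_smul, dotProduct_smul, Matrix.one_mulVec] at h
    have hone : (w k) ⬝ᵥ (((D k)ᵀ * Q * (D k)).mulVec (w k)) =
        w (k+1) ⬝ᵥ Q.mulVec (w (k+1)) := by
      rw [hws k, ← Matrix.mulVec_mulVec, ← Matrix.mulVec_mulVec,
        Matrix.dotProduct_mulVec, Matrix.vecMul_transpose]
    rw [hone] at h
    simp only [smul_eq_mul] at h
    linarith
  have hnn : ∀ z : Fin du ⊕ Fin ds → ℝ, (0:ℝ) ≤ z ⬝ᵥ z := fun z =>
    Finset.sum_nonneg fun i _ => mul_self_nonneg _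
  have hvv : v ⬝ᵥ v = ∑ i, v i ^ 2 := by
    simp [dotProduct, sq]
  -- induction: for k ≥ 1
  have hmain : ∀ k, 1 ≤ k → w k ⬝ᵥ Q.mulVec (w k) ≥ lam ^ (k - 1) * δ * (v ⬝ᵥ v) := by
    intro k hk
    induction k with
    | zero => omega
    | succ n ih =>
      cases Nat.eq_or_lt_of_le hk with
      | inl h =>
        have hn : n = 0 := by omega
        subst hn
        have := hstep 0
        rw [hw0] at this
        simp only [Nat.sub_self, pow_zero, one_mul]
        nlinarith
      | inr h =>
        have hn : 1 ≤ n := by omega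
        have ihn := ih hn
        have := hstep n
        have hQn : (0:ℝ) ≤ lam ^ (n-1) * δ * (v ⬝ᵥ v) :=
          mul_nonneg (mul_nonneg (pow_nonneg hlam0.le _) hδ.le) (hnn v)
        have hqn : (0:ℝ) ≤ w n ⬝ᵥ Q.mulVec (w n) := le_trans hQn ihn
        have hnn' := hnn (w n)
        have hpow : lam ^ (n + 1 - 1) = lam * lam ^ (n - 1) := by
          rw [Nat.add_sub_cancel]
          conv_lhs => rw [show n = (n-1)+1 from (Nat.succ_pred_eq_of_pos hn).symm]
          rw [pow_succ]
          ring
        rw [hpow]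
        nlinarith
  exact ⟨hfirst (w m), by rw [← hvv]; exact hmain m hm⟩
end

section
/- Let f : ℝⁿ → ℝⁿ be C¹ on a convex compact set K, let κ, κ' > 0, and suppose that for every matrix D in the interval enclosure [Df(K)] and every unit-slope vector v = (1, y) with ‖y‖_∞ ≤ κ (in coordinates ℝ × ℝ^{n−1}), writing Dv = (w_x, w_y), we have w_x ≠ 0 and ‖w_y/w_x‖_∞ ≤ κ'. Then for any two points p₁, p₂ ∈ K with ‖π_y(p₁ − p₂)‖_∞ < κ|π_x(p₁ − p₂)| one has ‖π_y(f(p₁) − f(p₂))‖_∞ ≤ κ'|π_x(f(p₁) − f(p₂))| and π_x(f(p₁) − f(p₂)) ≠ 0. -/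
/-!
Applying the mean value theorem to each coordinate `fᵢ` along the segment `[p₂, p₁] ⊆ K` gives
`f p₁ - f p₂ = D (p₁ - p₂)`, where row `i` of `D` is row `i` of `Df(zᵢ)` for some `zᵢ ∈ K`; so
`D ∈ [Df(K)]`. The cone condition, assumed for `D` only on vectors `(1, y)`, extends to the whole
cone by homogeneity, since `p₁ - p₂ = (π_x (p₁ - p₂)) • (1, y)` with `‖y‖_∞ < κ`.
-/

open Matrix Set

/-- The interval enclosure `[Df(K)]`. -/
def derivEnclosure {ι ι' E : Type*} (f' : E → Matrix ι' ι ℝ) (K : Set E) : Set (Matrix ι' ι ℝ) :=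
  {D | ∀ i j, D i j ∈ Icc (sInf ((fun z => f' z i j) '' K)) (sSup ((fun z => f' z i j) '' K))}

theorem mem_derivEnclosure_of_mem {ι ι' E : Type*} [TopologicalSpace E]
    {f' : E → Matrix ι' ι ℝ} {K : Set E} (hK : IsCompact K) (hf' : ContinuousOn f' K)
    {z : ι' → E} (hz : ∀ i, z i ∈ K) :
    Matrix.of (fun i j => f' (z i) i j) ∈ derivEnclosure f' K := by
  intro i j
  have hcont : ContinuousOn (fun z => f' z i j) K :=
    (continuous_apply_apply i j).comp_continuousOn hf'
  have hmem : f' (z i) i j ∈ (fun z => f' z i j) '' K := mem_image_of_mem _ (hz i)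
  exact ⟨csInf_le (hK.bddBelow_image hcont) hmem, le_csSup (hK.bddAbove_image hcont) hmem⟩

theorem Convex.exists_mem_sub_apply_eq_mulVec {ι ι' : Type*} [Fintype ι] [Fintype ι']
    {K : Set (ι → ℝ)} (hK : Convex ℝ K) {f : (ι → ℝ) → (ι' → ℝ)} {f' : (ι → ℝ) → Matrix ι' ι ℝ}
    (hf : ∀ z ∈ K, HasFDerivAt f (f' z).mulVecLin.toContinuousLinearMap z)
    {p q : ι → ℝ} (hp : p ∈ K) (hq : q ∈ K) (i : ι') :
    ∃ z ∈ K, f p i - f q i = (f' z *ᵥ (p - q)) i := by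
  obtain ⟨z, hz, h⟩ := domain_mvt (f := fun x => f x i)
    (f' := fun z => (ContinuousLinearMap.proj i).comp (f' z).mulVecLin.toContinuousLinearMap)
    (fun z hz => (hasFDerivAt_pi'.mp (hf z hz) i).hasFDerivWithinAt) hK hq hp
  exact ⟨z, hK.segment_subset hq hp hz, h⟩

theorem exists_mem_derivEnclosure_mulVec_eq_sub {ι ι' : Type*} [Fintype ι] [Fintype ι']
    {K : Set (ι → ℝ)} (hconv : Convex ℝ K) (hK : IsCompact K)
    {f : (ι → ℝ) → (ι' → ℝ)} {f' : (ι → ℝ) → Matrix ι' ι ℝ} (hf' : ContinuousOn f' K)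
    (hf : ∀ z ∈ K, HasFDerivAt f (f' z).mulVecLin.toContinuousLinearMap z)
    {p q : ι → ℝ} (hp : p ∈ K) (hq : q ∈ K) :
    ∃ D ∈ derivEnclosure f' K, D *ᵥ (p - q) = f p - f q := by
  choose z hzK hz using hconv.exists_mem_sub_apply_eq_mulVec hf hp hq
  refine ⟨_, mem_derivEnclosure_of_mem hK hf' hzK, funext fun i => ?_⟩
  exact (hz i).symm

/-- The cone `‖π_y v‖_∞ ≤ κ |π_x v|`, `π_x v ≠ 0`, with `π_x v = v 0`, `π_y v = v ∘ Fin.succ`. -/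
def InCone {m : ℕ} (κ : ℝ) (v : Fin (m + 1) → ℝ) : Prop :=
  v 0 ≠ 0 ∧ ∀ j : Fin m, |v j.succ| ≤ κ * |v 0|

theorem InCone.smul {m : ℕ} {κ c : ℝ} {v : Fin (m + 1) → ℝ} (hv : InCone κ v) (hc : c ≠ 0) :
    InCone κ (c • v) := by
  refine ⟨by simpa using mul_ne_zero hc hv.1, fun j => ?_⟩
  simp only [Pi.smul_apply, smul_eq_mul, abs_mul]
  calc |c| * |v j.succ| ≤ |c| * (κ * |v 0|) := by gcongr; exact hv.2 j
    _ = κ * (|c| * |v 0|) := by ring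

theorem InCone.mulVec {m : ℕ} {κ κ' : ℝ} {D : Matrix (Fin (m + 1)) (Fin (m + 1)) ℝ}
    (hD : ∀ v : Fin (m + 1) → ℝ, v 0 = 1 → (∀ j : Fin m, |v j.succ| ≤ κ) → InCone κ' (D *ᵥ v))
    {u : Fin (m + 1) → ℝ} (hu : InCone κ u) : InCone κ' (D *ᵥ u) := by
  have hv0 : ((u 0)⁻¹ • u) 0 = 1 := inv_mul_cancel₀ hu.1
  have hvy (j : Fin m) : |((u 0)⁻¹ • u) j.succ| ≤ κ := by
    rw [Pi.smul_apply, smul_eq_mul, abs_mul, abs_inv, inv_mul_le_iff₀ (abs_pos.mpr hu.1), mul_comm]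
    exact hu.2 j
  have hDu : D *ᵥ u = u 0 • D *ᵥ ((u 0)⁻¹ • u) := by
    rw [mulVec_smul, smul_smul, mul_inv_cancel₀ hu.1, one_smul]
  exact hDu ▸ (hD _ hv0 hvy).smul hu.1

open Matrix in
theorem stmt_16_general {m : ℕ} (K : Set (Fin (m + 1) → ℝ)) (hconv : Convex ℝ K)
    (hK : IsCompact K)
    (f : (Fin (m + 1) → ℝ) → (Fin (m + 1) → ℝ))
    (f' : (Fin (m + 1) → ℝ) → Matrix (Fin (m + 1)) (Fin (m + 1)) ℝ)
    (hf'cont : ContinuousOn f' K)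
    (hderiv : ∀ z ∈ K, HasFDerivAt f ((f' z).mulVecLin.toContinuousLinearMap) z)
    (κ κ' : ℝ)
    (hcone : ∀ D : Matrix (Fin (m + 1)) (Fin (m + 1)) ℝ,
      (∀ i j, D i j ∈ Set.Icc (sInf ((fun z => f' z i j) '' K))
                              (sSup ((fun z => f' z i j) '' K))) →
      ∀ v : Fin (m + 1) → ℝ, v 0 = 1 → (∀ j : Fin m, |v j.succ| ≤ κ) →
        (D.mulVec v) 0 ≠ 0 ∧
        ∀ j : Fin m, |(D.mulVec v) j.succ| ≤ κ' * |(D.mulVec v) 0|)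
    (p₁ p₂ : Fin (m + 1) → ℝ) (hp₁ : p₁ ∈ K) (hp₂ : p₂ ∈ K)
    (hx : p₁ 0 ≠ p₂ 0)
    (hy : ∀ j : Fin m, |p₁ j.succ - p₂ j.succ| < κ * |p₁ 0 - p₂ 0|) :
    f p₁ 0 ≠ f p₂ 0 ∧
    ∀ j : Fin m, |f p₁ j.succ - f p₂ j.succ| ≤ κ' * |f p₁ 0 - f p₂ 0| := by
  obtain ⟨D, hD, hDp⟩ :=
    exists_mem_derivEnclosure_mulVec_eq_sub hconv hK hf'cont hderiv hp₁ hp₂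
  have hp : InCone κ (p₁ - p₂) := ⟨sub_ne_zero.mpr hx, fun j => (hy j).le⟩
  obtain ⟨hfx, hfy⟩ : InCone κ' (f p₁ - f p₂) := hDp ▸ hp.mulVec (hcone D hD)
  exact ⟨sub_ne_zero.mp hfx, hfy⟩

open Matrix in
/-- Cone conditions via interval enclosure of the derivative (`d_x = 1`, sup-norm):
if every matrix `D` in the interval enclosure `[Df(K)]` maps each vector `(1, y)` with
`‖y‖_∞ ≤ κ` to a vector `(w_x, w_y)` with `w_x ≠ 0` and `‖w_y‖_∞ ≤ κ' |w_x|`, then for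
`p₁, p₂ ∈ K` with `‖π_y(p₁−p₂)‖_∞ < κ |π_x(p₁−p₂)|` one has
`π_x(f(p₁)−f(p₂)) ≠ 0` and `‖π_y(f(p₁)−f(p₂))‖_∞ ≤ κ' |π_x(f(p₁)−f(p₂))|`. -/
theorem stmt_16 {m : ℕ} (K : Set (Fin (m + 1) → ℝ)) (hconv : Convex ℝ K)
    (hK : IsCompact K)
    (f : (Fin (m + 1) → ℝ) → (Fin (m + 1) → ℝ))
    (f' : (Fin (m + 1) → ℝ) → Matrix (Fin (m + 1)) (Fin (m + 1)) ℝ)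
    (hf'cont : ContinuousOn f' K)
    (hderiv : ∀ z ∈ K, HasFDerivAt f ((f' z).mulVecLin.toContinuousLinearMap) z)
    (κ κ' : ℝ) (hκ : 0 < κ) (hκ' : 0 < κ')
    (hcone : ∀ D : Matrix (Fin (m + 1)) (Fin (m + 1)) ℝ,
      (∀ i j, D i j ∈ Set.Icc (sInf ((fun z => f' z i j) '' K))
                              (sSup ((fun z => f' z i j) '' K))) →
      ∀ v : Fin (m + 1) → ℝ, v 0 = 1 → (∀ j : Fin m, |v j.succ| ≤ κ) →
        (D.mulVec v) 0 ≠ 0 ∧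
        ∀ j : Fin m, |(D.mulVec v) j.succ| ≤ κ' * |(D.mulVec v) 0|)
    (p₁ p₂ : Fin (m + 1) → ℝ) (hp₁ : p₁ ∈ K) (hp₂ : p₂ ∈ K)
    (hx : p₁ 0 ≠ p₂ 0)
    (hy : ∀ j : Fin m, |p₁ j.succ - p₂ j.succ| < κ * |p₁ 0 - p₂ 0|) :
    f p₁ 0 ≠ f p₂ 0 ∧
    ∀ j : Fin m, |f p₁ j.succ - f p₂ j.succ| ≤ κ' * |f p₁ 0 - f p₂ 0| :=
  stmt_16_general K hconv hK f f' hf'cont hderiv κ κ' hcone p₁ p₂ hp₁ hp₂ hx hy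
end
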